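/- Let d ≥ 1, s ∈ ℝ, 0 < p, q ≤ ∞, a > 0. For any (z,r) ∈ G = ℝ^d × (0,∞), the left translation L_{(z,r)} maps Ṗ^{s,a}_{p,q}(G) to itself with operator norm exactly r^{d(1/p−1/q)−s}, i.e. ‖L_{(z,r)}F | Ṗ^{s,a}_{p,q}‖ = r^{d(1/p−1/q)−s} ‖F | Ṗ^{s,a}_{p,q}‖ for every measurable F on G; and the right translation R_{(z,r)} is bounded on Ṗ^{s,a}_{p,q}(G) with ‖R_{(z,r)}F | Ṗ^{s,a}_{p,q}‖ ≤ r^{s+d/q} max{1, r^{−a}} (1+|z|)^a ‖F | Ṗ^{s,a}_{p,q}‖ for every measurable F on G. -/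

import Mathlib

open MeasureTheory Real SchwartzMap Set
open scoped ENNReal NNReal FourierTransform

noncomputable section

/-- `d`-dimensional Euclidean space. -/
abbrev Ed (d : ℕ) : Type := EuclideanSpace ℝ (Fin d)

/-- Complex-valued Schwartz functions on `ℝ^d`. -/
abbrev SchwartzC (d : ℕ) := SchwartzMap (Ed d) ℂ

/-- Tempered distributions on `ℝ^d`. -/
abbrev TemperedDist (d : ℕ) := SchwartzC d →L[ℂ] ℂ

variable {d : ℕ}

lemma affine_htg (a : Ed d) (L : Ed d →L[ℝ] Ed d) :
    Function.HasTemperateGrowth (fun y : Ed d => a + L y) := by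
  apply Function.HasTemperateGrowth.of_fderiv (k := 1) (C := ‖a‖ + ‖L‖)
  · have h : (fderiv ℝ fun y : Ed d => a + L y) = fun _ => (L : Ed d →L[ℝ] Ed d) := by
      funext y
      rw [fderiv_const_add]
      exact L.fderiv
    rw [h]
    exact .const _
  · exact (differentiable_const a).add L.differentiable
  · intro y
    have h1 : ‖a + L y‖ ≤ ‖a‖ + ‖L‖ * ‖y‖ :=
      (norm_add_le _ _).trans (by gcongr; exact L.le_opNorm y)
    have h2 : (0:ℝ) ≤ ‖a‖ := norm_nonneg a
    have h3 : (0:ℝ) ≤ ‖L‖ := norm_nonneg L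
    have h4 : (0:ℝ) ≤ ‖y‖ := norm_nonneg y
    nlinarith

lemma htg_shiftdil (x : Ed d) (c : ℝ) :
    Function.HasTemperateGrowth (fun y : Ed d => c • (x - y)) := by
  have h : (fun y : Ed d => c • (x - y))
      = fun y => c • x + ((-c) • ContinuousLinearMap.id ℝ (Ed d)) y := by
    funext y
    simp [smul_sub, sub_eq_add_neg, neg_smul]
  rw [h]
  exact affine_htg _ _

/-- The Schwartz function `y ↦ Φ (t⁻¹ • (x - y))`. -/
def shiftDil (Φ : SchwartzC d) (x : Ed d) {t : ℝ} (ht : 0 < t) : SchwartzC d :=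
  SchwartzMap.compCLM ℂ (htg_shiftdil x t⁻¹)
    ⟨1, ‖x‖ + t, by
      intro y
      have h1 : ‖t⁻¹ • (x - y)‖ = t⁻¹ * ‖x - y‖ := by
        rw [norm_smul, Real.norm_eq_abs, abs_of_pos (by positivity)]
      have h2 : ‖y‖ ≤ ‖x‖ + ‖x - y‖ := by
        have hy : y = x - (x - y) := by abel
        calc ‖y‖ = ‖x - (x - y)‖ := by rw [← hy]
        _ ≤ ‖x‖ + ‖x - y‖ := norm_sub_le _ _
      have h3 : ‖x - y‖ = t * ‖t⁻¹ • (x - y)‖ := by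
        rw [h1]; field_simp
      have h4 : (0:ℝ) ≤ ‖t⁻¹ • (x - y)‖ := norm_nonneg _
      have h5 : (0:ℝ) ≤ ‖x‖ := norm_nonneg x
      calc ‖y‖ ≤ ‖x‖ + t * ‖t⁻¹ • (x - y)‖ := by rw [← h3]; exact h2
      _ ≤ (‖x‖ + t) * (1 + ‖t⁻¹ • (x - y)‖) ^ 1 := by nlinarith⟩ Φ

/-- `(Φ_t ∗ f)(x) = f (Φ_t (x - ·))` where `Φ_t = t^{-d} Φ(·/t)`; set to `0` for `t ≤ 0`. -/
def convAt (f : TemperedDist d) (Φ : SchwartzC d) (t : ℝ) (x : Ed d) : ℂ :=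
  if ht : 0 < t then ((t : ℂ) ^ d)⁻¹ * f (shiftDil Φ x ht) else 0

/-- Extended nonnegative norm of a complex number. -/
def enn (z : ℂ) : ℝ≥0∞ := (‖z‖₊ : ℝ≥0∞)

/-- The Peetre maximal function `(Φ_t^∗ f)_a (x)`. -/
def peetreAt (f : TemperedDist d) (Φ : SchwartzC d) (a t : ℝ) (x : Ed d) : ℝ≥0∞ :=
  ⨆ y : Ed d, enn (convAt f Φ t (x + y)) / ENNReal.ofReal ((1 + ‖y‖ / t) ^ a)

/-- `L_p`-quasinorm (with values in `[0,∞]`) of an extended-valued function, `0 < p ≤ ∞`. -/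
def lpE (p : ℝ≥0∞) (F : Ed d → ℝ≥0∞) : ℝ≥0∞ :=
  if p = ∞ then essSup F volume
  else (∫⁻ x, F x ^ p.toReal) ^ (1 / p.toReal)

/-- `(∫_S G(t)^q w(t) dt)^{1/q}` with the usual modification (`sup` over `S`) for `q = ∞`. -/
def intAgg (q : ℝ≥0∞) (S : Set ℝ) (w : ℝ → ℝ) (G : ℝ → ℝ≥0∞) : ℝ≥0∞ :=
  if q = ∞ then ⨆ t ∈ S, G t
  else (∫⁻ t in S, G t ^ q.toReal * ENNReal.ofReal (w t)) ^ (1 / q.toReal)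

/-- `(Σ_{k∈ℕ} G(k)^q)^{1/q}` with the usual modification for `q = ∞`. -/
def sumAggN (q : ℝ≥0∞) (G : ℕ → ℝ≥0∞) : ℝ≥0∞ :=
  if q = ∞ then ⨆ k, G k else (∑' k, G k ^ q.toReal) ^ (1 / q.toReal)

/-- `(Σ_{k∈ℤ} G(k)^q)^{1/q}` with the usual modification for `q = ∞`. -/
def sumAggZ (q : ℝ≥0∞) (G : ℤ → ℝ≥0∞) : ℝ≥0∞ :=
  if q = ∞ then ⨆ k, G k else (∑' k, G k ^ q.toReal) ^ (1 / q.toReal)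

/-- Tent (Lusin) aggregation `(∫_S ∫_{|z|<t} H(t,z)^q dz dt/t^{d+1})^{1/q}`,
with the usual modification for `q = ∞`. -/
def tentAgg (q : ℝ≥0∞) (S : Set ℝ) (H : ℝ → Ed d → ℝ≥0∞) : ℝ≥0∞ :=
  if q = ∞ then ⨆ t ∈ S, ⨆ z ∈ Metric.ball (0 : Ed d) t, H t z
  else (∫⁻ t in S, (∫⁻ z in Metric.ball (0 : Ed d) t, H t z ^ q.toReal) *
      ENNReal.ofReal (t ^ (-(d : ℝ) - 1))) ^ (1 / q.toReal)

/-- Inhomogeneous kernel family: `Φ₀` for `j = 0` and `Φ` for `j ≥ 1`. -/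
def kin (Φ₀ Φ : SchwartzC d) (j : ℕ) : SchwartzC d := if j = 0 then Φ₀ else Φ

/-- Dyadic scale `2^{-j}`, `j ∈ ℕ`. -/
def scN (j : ℕ) : ℝ := (2 : ℝ) ^ (-(j : ℤ))

/-- Dyadic scale `2^{-k}`, `k ∈ ℤ`. -/
def scZ (k : ℤ) : ℝ := (2 : ℝ) ^ (-k)

/-- Tauberian condition for the pair `(Φ₀, Φ)` with parameter `ε`. -/
def TauberianPair (Φ₀ Φ : SchwartzC d) (ε : ℝ) : Prop :=
  (∀ ξ : Ed d, ‖ξ‖ < 2 * ε → 𝓕 ⇑Φ₀ ξ ≠ 0) ∧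
  (∀ ξ : Ed d, ε / 2 < ‖ξ‖ → ‖ξ‖ < 2 * ε → 𝓕 ⇑Φ ξ ≠ 0)

/-- Homogeneous Tauberian condition for `Φ` with parameter `ε`. -/
def TauberianHom (Φ : SchwartzC d) (ε : ℝ) : Prop :=
  ∀ ξ : Ed d, ε / 2 < ‖ξ‖ → ‖ξ‖ < 2 * ε → 𝓕 ⇑Φ ξ ≠ 0

/-- Moment condition of order `R`: all derivatives of `ℱΦ` of order `≤ R` vanish at `0`. -/
def MomentCond (Φ : SchwartzC d) (R : ℕ) : Prop :=
  ∀ n : ℕ, n ≤ R → iteratedFDeriv ℝ n (𝓕 ⇑Φ) 0 = 0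

/-- `φ ∈ S₀`: all derivatives of the Fourier transform vanish at the origin. -/
def IsS0 (φ : SchwartzC d) : Prop :=
  ∀ n : ℕ, iteratedFDeriv ℝ n (𝓕 ⇑φ) 0 = 0

/-- Inverse Fourier transform of a Schwartz function, as a Schwartz function. -/
def invF (φ : SchwartzC d) : SchwartzC d := (FourierTransform.fourierCLE ℂ (SchwartzC d) (F := SchwartzC d)).symm φ

/-- Inhomogeneous dyadic resolution of unity `{φ_j}_{j∈ℕ}`, `φ_j = φ(2^{-j}·)` for `j ≥ 1`. -/
structure IsInhomPartition (φ₀ φ : SchwartzC d) : Prop where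
  supp₀ : ∀ ξ : Ed d, 2 < ‖ξ‖ → φ₀ ξ = 0
  supp : ∀ ξ : Ed d, ‖ξ‖ < 1 / 2 ∨ 2 < ‖ξ‖ → φ ξ = 0
  sum_one : ∀ ξ : Ed d, HasSum (fun j : ℕ => (kin φ₀ φ j) (scN j • ξ)) 1

/-- Homogeneous dyadic resolution of unity `{φ_j}_{j∈ℤ}`, `φ_j = φ(2^{-j}·)`. -/
structure IsHomPartition (φ : SchwartzC d) : Prop where
  supp : ∀ ξ : Ed d, ‖ξ‖ < 1 / 2 ∨ 2 < ‖ξ‖ → φ ξ = 0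
  sum_one : ∀ ξ : Ed d, ξ ≠ 0 → HasSum (fun j : ℤ => φ (scZ j • ξ)) 1

/-- `min{p,q}` where `q` may be `∞`. -/
def minpq (p : ℝ) (q : ℝ≥0∞) : ℝ := if q = ∞ then p else min p q.toReal

/-- `1/p` with the convention `1/∞ = 0`. -/
def invE (p : ℝ≥0∞) : ℝ := if p = ∞ then 0 else 1 / p.toReal

end
section Part2
noncomputable section

open MeasureTheory Real SchwartzMap Set
open scoped ENNReal NNReal FourierTransform

variable {d : ℕ}

/-- dyadic factor `2^{e·s}` as an extended nonnegative real. -/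
def dy (e s : ℝ) : ℝ≥0∞ := ENNReal.ofReal ((2 : ℝ) ^ (e * s))

/-- The five quantities `‖f‖₁,…,‖f‖₅` of Theorem 2.2 (inhomogeneous `F`-scale). -/
def QF (Φ₀ Φ : SchwartzC d) (s p : ℝ) (q : ℝ≥0∞) (a : ℝ) :
    Fin 5 → TemperedDist d → ℝ≥0∞ :=
  ![fun f => lpE (ENNReal.ofReal p) (fun x => enn (convAt f Φ₀ 1 x))
      + lpE (ENNReal.ofReal p) (fun x =>
          intAgg q (Ioc 0 1) (fun t => t⁻¹)
            (fun t => ENNReal.ofReal (t ^ (-s)) * enn (convAt f Φ t x))),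
    fun f => lpE (ENNReal.ofReal p) (fun x => peetreAt f Φ₀ a 1 x)
      + lpE (ENNReal.ofReal p) (fun x =>
          intAgg q (Ioc 0 1) (fun t => t⁻¹)
            (fun t => ENNReal.ofReal (t ^ (-s)) * peetreAt f Φ a t x)),
    fun f => lpE (ENNReal.ofReal p) (fun x => enn (convAt f Φ₀ 1 x))
      + lpE (ENNReal.ofReal p) (fun x =>
          tentAgg q (Ioc 0 1)
            (fun t z => ENNReal.ofReal (t ^ (-s)) * enn (convAt f Φ t (x + z)))),
    fun f => lpE (ENNReal.ofReal p) (fun x =>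
        sumAggN q (fun k => dy k s * peetreAt f (kin Φ₀ Φ k) a (scN k) x)),
    fun f => lpE (ENNReal.ofReal p) (fun x =>
        sumAggN q (fun k => dy k s * enn (convAt f (kin Φ₀ Φ k) (scN k) x)))]

/-- The quasi-norm of `F^s_{p,q}(ℝ^d)` built from a dyadic resolution of unity `(φ₀, φ)`. -/
def FnormI (φ₀ φ : SchwartzC d) (s p : ℝ) (q : ℝ≥0∞) (f : TemperedDist d) : ℝ≥0∞ :=
  lpE (ENNReal.ofReal p) (fun x =>
    sumAggN q (fun j => dy j s * enn (convAt f (kin (invF φ₀) (invF φ) j) (scN j) x)))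

/-- The four quantities of the inhomogeneous Besov characterization. -/
def QB (Φ₀ Φ : SchwartzC d) (s : ℝ) (p q : ℝ≥0∞) (a : ℝ) :
    Fin 4 → TemperedDist d → ℝ≥0∞ :=
  ![fun f => lpE p (fun x => enn (convAt f Φ₀ 1 x))
      + intAgg q (Ioc 0 1) (fun t => t⁻¹)
          (fun t => ENNReal.ofReal (t ^ (-s)) * lpE p (fun x => enn (convAt f Φ t x))),
    fun f => lpE p (fun x => peetreAt f Φ₀ a 1 x)
      + intAgg q (Ioc 0 1) (fun t => t⁻¹)
          (fun t => ENNReal.ofReal (t ^ (-s)) * lpE p (fun x => peetreAt f Φ a t x)),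
    fun f => sumAggN q (fun k =>
        dy k s * lpE p (fun x => peetreAt f (kin Φ₀ Φ k) a (scN k) x)),
    fun f => sumAggN q (fun k =>
        dy k s * lpE p (fun x => enn (convAt f (kin Φ₀ Φ k) (scN k) x)))]

/-- The quasi-norm of `B^s_{p,q}(ℝ^d)` built from a dyadic resolution of unity `(φ₀, φ)`. -/
def BnormI (φ₀ φ : SchwartzC d) (s : ℝ) (p q : ℝ≥0∞) (f : TemperedDist d) : ℝ≥0∞ :=
  sumAggN q (fun j =>
    dy j s * lpE p (fun x => enn (convAt f (kin (invF φ₀) (invF φ) j) (scN j) x)))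

/-- The five quantities of the homogeneous `F`-scale characterization. -/
def QFdot (Φ : SchwartzC d) (s p : ℝ) (q : ℝ≥0∞) (a : ℝ) :
    Fin 5 → TemperedDist d → ℝ≥0∞ :=
  ![fun f => lpE (ENNReal.ofReal p) (fun x =>
        intAgg q (Ioi 0) (fun t => t⁻¹)
          (fun t => ENNReal.ofReal (t ^ (-s)) * enn (convAt f Φ t x))),
    fun f => lpE (ENNReal.ofReal p) (fun x =>
        intAgg q (Ioi 0) (fun t => t⁻¹)
          (fun t => ENNReal.ofReal (t ^ (-s)) * peetreAt f Φ a t x)),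
    fun f => lpE (ENNReal.ofReal p) (fun x =>
        tentAgg q (Ioi 0)
          (fun t z => ENNReal.ofReal (t ^ (-s)) * enn (convAt f Φ t (x + z)))),
    fun f => lpE (ENNReal.ofReal p) (fun x =>
        sumAggZ q (fun k => dy k s * peetreAt f Φ a (scZ k) x)),
    fun f => lpE (ENNReal.ofReal p) (fun x =>
        sumAggZ q (fun k => dy k s * enn (convAt f Φ (scZ k) x)))]

/-- The quasi-norm of `Ḟ^s_{p,q}(ℝ^d)` built from a homogeneous resolution of unity `φ`. -/
def FnormH (φ : SchwartzC d) (s p : ℝ) (q : ℝ≥0∞) (f : TemperedDist d) : ℝ≥0∞ :=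
  lpE (ENNReal.ofReal p) (fun x =>
    sumAggZ q (fun j => dy j s * enn (convAt f (invF φ) (scZ j) x)))

/-- The four quantities of the homogeneous Besov characterization. -/
def QBdot (Φ : SchwartzC d) (s : ℝ) (p q : ℝ≥0∞) (a : ℝ) :
    Fin 4 → TemperedDist d → ℝ≥0∞ :=
  ![fun f => intAgg q (Ioi 0) (fun t => t⁻¹)
        (fun t => ENNReal.ofReal (t ^ (-s)) * lpE p (fun x => enn (convAt f Φ t x))),
    fun f => intAgg q (Ioi 0) (fun t => t⁻¹)
        (fun t => ENNReal.ofReal (t ^ (-s)) * lpE p (fun x => peetreAt f Φ a t x)),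
    fun f => sumAggZ q (fun k => dy k s * lpE p (fun x => peetreAt f Φ a (scZ k) x)),
    fun f => sumAggZ q (fun k => dy k s * lpE p (fun x => enn (convAt f Φ (scZ k) x)))]

/-- The quasi-norm of `Ḃ^s_{p,q}(ℝ^d)` built from a homogeneous resolution of unity `φ`. -/
def BnormH (φ : SchwartzC d) (s : ℝ) (p q : ℝ≥0∞) (f : TemperedDist d) : ℝ≥0∞ :=
  sumAggZ q (fun j => dy j s * lpE p (fun x => enn (convAt f (invF φ) (scZ j) x)))

/-- Distributional continuous wavelet transform `W_g f(x,t) = t^{d/2} (g_t ∗ f)(x)`. -/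
def WT (g : SchwartzC d) (f : TemperedDist d) (x : Ed d) (t : ℝ) : ℂ :=
  ((t ^ ((d : ℝ) / 2) : ℝ) : ℂ) * convAt f g t x

end
end Part2
section Part3
noncomputable section

open MeasureTheory Real SchwartzMap Set
open scoped ENNReal NNReal FourierTransform

variable {d : ℕ}

/-! ### Function spaces on the `ax+b`-group `G = ℝ^d × (0,∞)` -/

/-- Left translation on the `ax+b`-group: `L_{(z,r)}F(x,t) = F((x-z)/r, t/r)`. -/
def leftTr (z : Ed d) (r : ℝ) (F : Ed d × ℝ → ℂ) : Ed d × ℝ → ℂ :=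
  fun w => F (r⁻¹ • (w.1 - z), w.2 / r)

/-- Right translation on the `ax+b`-group: `R_{(z,r)}F(x,t) = F(x + t•z, r·t)`. -/
def rightTr (z : Ed d) (r : ℝ) (F : Ed d × ℝ → ℂ) : Ed d × ℝ → ℂ :=
  fun w => F (w.1 + w.2 • z, r * w.2)

/-- Peetre maximal function on the group, for extended-valued `F`. -/
def peetreSupE (a : ℝ) (F : Ed d × ℝ → ℝ≥0∞) (x : Ed d) (t : ℝ) : ℝ≥0∞ :=
  ⨆ y : Ed d, F (x + y, t) / ENNReal.ofReal ((1 + ‖y‖ / t) ^ a)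

/-- Quasi-norm of the Peetre-type space `Ṗ^{s,a}_{p,q}(G)` (extended-valued version). -/
def PGnormE (s a : ℝ) (p q : ℝ≥0∞) (F : Ed d × ℝ → ℝ≥0∞) : ℝ≥0∞ :=
  lpE p (fun x =>
    intAgg q (Ioi 0) (fun t => t ^ (-(d : ℝ) - 1))
      (fun t => ENNReal.ofReal (t ^ (-s)) * peetreSupE a F x t))

/-- Quasi-norm of `Ṗ^{s,a}_{p,q}(G)` of a complex-valued function on the group. -/
def PGnorm (s a : ℝ) (p q : ℝ≥0∞) (F : Ed d × ℝ → ℂ) : ℝ≥0∞ :=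
  PGnormE s a p q (fun w => enn (F w))

/-- Quasi-norm of the space `L̇^s_{p,q}(G)` (extended-valued version). -/
def LGnormE (s : ℝ) (p q : ℝ≥0∞) (F : Ed d × ℝ → ℝ≥0∞) : ℝ≥0∞ :=
  intAgg q (Ioi 0) (fun t => t ^ (-(d : ℝ) - 1))
    (fun t => ENNReal.ofReal (t ^ (-s)) * lpE p (fun x => F (x, t)))

/-- Quasi-norm of `L̇^s_{p,q}(G)` of a complex-valued function on the group. -/
def LGnorm (s : ℝ) (p q : ℝ≥0∞) (F : Ed d × ℝ → ℂ) : ℝ≥0∞ :=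
  LGnormE s p q (fun w => enn (F w))

/-- Quasi-norm of the tent space `Ṫ^s_{p,q}(G)` of a complex-valued function on the group. -/
def TGnorm (s : ℝ) (p : ℝ≥0∞) (q : ℝ≥0∞) (F : Ed d × ℝ → ℂ) : ℝ≥0∞ :=
  lpE p (fun x =>
    tentAgg q (Ioi 0) (fun t z => ENNReal.ofReal (t ^ (-s)) * enn (F (x + z, t))))

/-- The cube `Q_{j,k} = Π_i [α k_i β^{-j}, α(k_i+1)β^{-j}]`. -/
def Qcube (α β : ℝ) (j : ℤ) (k : Fin d → ℤ) : Set (Ed d) :=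
  {x | ∀ i, α * k i * β ^ (-j) ≤ x i ∧ x i ≤ α * (k i + 1) * β ^ (-j)}

/-- The step function `F(x,t) = Σ_{j,k} |λ_{j,k}| χ_{Q_{j,k}}(x) χ_{[β^{-(j+1)},β^{-j}]}(t)`
associated with a sequence `λ` (extended-valued). -/
def stepFn (α β : ℝ) (lam : ℤ → (Fin d → ℤ) → ℂ) : Ed d × ℝ → ℝ≥0∞ :=
  fun w => ∑' (j : ℤ) (k : Fin d → ℤ),
    (Qcube α β j k).indicator (fun _ => (‖lam j k‖₊ : ℝ≥0∞)) w.1 *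
      (Icc (β ^ (-(j + 1)) : ℝ) (β ^ (-j))).indicator (fun _ => 1) w.2

/-! ### The continuous wavelet transform of square-integrable functions -/

variable {V : Type*} [NormedAddCommGroup V] [InnerProductSpace ℝ V]
  [MeasurableSpace V] [BorelSpace V] [FiniteDimensional ℝ V]

/-- Condition `(D)`: rapid polynomial decay. -/
def CondD (Ψ : V → ℂ) : Prop :=
  ∀ N : ℕ, ∃ C : ℝ, ∀ x, ‖Ψ x‖ ≤ C / (1 + ‖x‖) ^ N

/-- Condition `(M_{L-1})`: vanishing moments of all orders `< L` (vacuous for `L = 0`). -/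
def CondM (Ψ : V → ℂ) (L : ℕ) : Prop :=
  ∀ n : ℕ, n < L → iteratedFDeriv ℝ n (𝓕 Ψ) 0 = 0

end
end Part3
section Part4
noncomputable section

open MeasureTheory Real SchwartzMap Set
open scoped ENNReal NNReal FourierTransform

variable {V : Type*} [NormedAddCommGroup V] [InnerProductSpace ℝ V]
  [MeasureSpace V] [BorelSpace V] [FiniteDimensional ℝ V]

/-- Condition `(S_K)`: `(1+|ξ|)^K |D^ᾱ ℱΨ(ξ)|` is integrable for every multi-index. -/
def CondS (Ψ : V → ℂ) (K : ℝ) : Prop :=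
  ∀ n : ℕ, Integrable (fun ξ : V =>
    (1 + ‖ξ‖) ^ K * ‖iteratedFDeriv ℝ n (𝓕 Ψ) ξ‖) volume

/-- The continuous wavelet transform `W_g f(x,t) = ⟨T_x D_t^{L₂} g, f⟩` of functions. -/
def CWT (g f : V → ℂ) (x : V) (t : ℝ) : ℂ :=
  ∫ y : V, (starRingEnd ℂ)
      (((t ^ (-(Module.finrank ℝ V : ℝ) / 2) : ℝ) : ℂ) * g (t⁻¹ • (y - x))) * f y

end
end Part4
open MeasureTheory Real SchwartzMap Set
open scoped ENNReal NNReal FourierTransform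

/-!
Both translations act on `G` through affine changes of variables: `L_{(z,r)}` replaces `x` by
`(x - z)/r` and `t` by `t/r`, and the Peetre supremum is invariant under the simultaneous
rescaling of `y`. Lebesgue measure on `ℝ^d` picks up `r^{d/p}` after the `L_p` root, the measure
`dt/t^{d+1}` picks up `r^{-d/q}`, and the weight `t^{-s}` picks up `r^{-s}`; since these are
equalities, the operator norm is attained. For `R_{(z,r)}` the dilation `t ↦ rt` is handled the
same way, while the shift `y ↦ y + tz` is absorbed into the Peetre weight by
`1 + |y + tz|/(rt) ≤ max(1, r⁻¹) (1 + |z|) (1 + |y|/t)`.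
-/

section TranslationInvariance

variable {d : ℕ}

section ChangeOfVariables

variable {E : Type*} [NormedAddCommGroup E] [NormedSpace ℝ E] [MeasurableSpace E]
  [BorelSpace E]

lemma measurableEmbedding_smul_add {ρ : ℝ} (hρ : ρ ≠ 0) (z : E) :
    MeasurableEmbedding (fun x : E => ρ • x + z) :=
  ((Homeomorph.smulOfNeZero ρ hρ).trans (Homeomorph.addRight z)).measurableEmbedding

variable [FiniteDimensional ℝ E] (μ : Measure E) [μ.IsAddHaarMeasure]

lemma map_smul_add_addHaar {ρ : ℝ} (hρ : ρ ≠ 0) (z : E) :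
    Measure.map (fun x : E => ρ • x + z) μ =
      ENNReal.ofReal |(ρ ^ Module.finrank ℝ E)⁻¹| • μ := by
  have h : (fun x : E => ρ • x + z) = (· + z) ∘ (ρ • ·) := rfl
  rw [h, ← Measure.map_map (measurable_add_const z) (measurable_const_smul ρ),
    Measure.map_addHaar_smul μ hρ, Measure.map_smul, map_add_right_eq_self]

lemma lintegral_comp_smul_add {ρ : ℝ} (hρ : ρ ≠ 0) (z : E) (g : E → ℝ≥0∞) :
    ∫⁻ x, g (ρ • x + z) ∂μ = ENNReal.ofReal |(ρ ^ Module.finrank ℝ E)⁻¹| * ∫⁻ x, g x ∂μ := by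
  rw [← (measurableEmbedding_smul_add hρ z).lintegral_map, map_smul_add_addHaar μ hρ z,
    lintegral_smul_measure, smul_eq_mul]

lemma essSup_comp_smul_add {ρ : ℝ} (hρ : ρ ≠ 0) (z : E) (g : E → ℝ≥0∞) :
    essSup (fun x => g (ρ • x + z)) μ = essSup g μ := by
  have h := (measurableEmbedding_smul_add hρ z).essSup_map_measure (g := g) (μ := μ)
  rw [map_smul_add_addHaar μ hρ z, essSup_ennreal_smul_measure (by positivity)] at h
  exact h.symm

end ChangeOfVariables

lemma lintegral_comp_mul_left_of_pos {ρ : ℝ} (hρ : 0 < ρ) (g : ℝ → ℝ≥0∞) :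
    ∫⁻ t, g (ρ * t) = ENNReal.ofReal ρ⁻¹ * ∫⁻ t, g t := by
  simpa [abs_of_pos hρ] using lintegral_comp_smul_add volume hρ.ne' (0 : ℝ) g

lemma lintegral_Ioi_comp_mul_mul_rpow (D : ℝ) {ρ : ℝ} (hρ : 0 < ρ) (g : ℝ → ℝ≥0∞) :
    ∫⁻ t in Ioi 0, g (ρ * t) * ENNReal.ofReal (t ^ (-D - 1)) =
      ENNReal.ofReal (ρ ^ D) * ∫⁻ t in Ioi 0, g t * ENNReal.ofReal (t ^ (-D - 1)) := by
  set h := (Ioi (0 : ℝ)).indicator fun t => g t * ENNReal.ofReal (t ^ (-D - 1))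
  have hpt : ∀ t, (Ioi (0 : ℝ)).indicator (fun t => g (ρ * t) * ENNReal.ofReal (t ^ (-D - 1))) t
      = ENNReal.ofReal (ρ ^ (D + 1)) * h (ρ * t) := by
    intro t
    by_cases ht : 0 < t
    · have hweight : t ^ (-D - 1) = ρ ^ (D + 1) * (ρ * t) ^ (-D - 1) := by
        rw [mul_rpow hρ.le ht.le, ← mul_assoc, ← rpow_add hρ]
        simp
      simp only [h, indicator_of_mem (mem_Ioi.2 ht), indicator_of_mem (mem_Ioi.2 (mul_pos hρ ht)),
        hweight, ENNReal.ofReal_mul (rpow_nonneg hρ.le _)]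
      ring
    · have hρt : ¬ 0 < ρ * t := fun h' => ht (pos_of_mul_pos_right h' hρ.le)
      simp [h, indicator_of_notMem (show t ∉ Ioi 0 from ht),
        indicator_of_notMem (show ρ * t ∉ Ioi 0 from hρt)]
  rw [← lintegral_indicator measurableSet_Ioi, ← lintegral_indicator measurableSet_Ioi,
    funext hpt, lintegral_const_mul' _ _ ENNReal.ofReal_ne_top,
    lintegral_comp_mul_left_of_pos hρ, ← mul_assoc, ← ENNReal.ofReal_mul (by positivity),
    rpow_add_one hρ.ne', mul_inv_cancel_right₀ hρ.ne']

lemma intAgg_mono (q : ℝ≥0∞) {S : Set ℝ} (hS : MeasurableSet S) (w : ℝ → ℝ)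
    {G H : ℝ → ℝ≥0∞} (h : ∀ t ∈ S, G t ≤ H t) :
    intAgg q S w G ≤ intAgg q S w H := by
  unfold intAgg
  split
  · exact iSup₂_mono h
  · refine ENNReal.rpow_le_rpow (setLIntegral_mono' hS fun t ht => ?_) (by positivity)
    gcongr
    exact h t ht

lemma intAgg_congr (q : ℝ≥0∞) {S : Set ℝ} (hS : MeasurableSet S) (w : ℝ → ℝ)
    {G H : ℝ → ℝ≥0∞} (h : ∀ t ∈ S, G t = H t) :
    intAgg q S w G = intAgg q S w H :=
  (intAgg_mono q hS w fun t ht => (h t ht).le).antisymm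
    (intAgg_mono q hS w fun t ht => (h t ht).ge)

lemma intAgg_const_mul {q : ℝ≥0∞} (hq : 0 < q) (S : Set ℝ) (w : ℝ → ℝ) {c : ℝ≥0∞}
    (hc : c ≠ ∞) (G : ℝ → ℝ≥0∞) :
    intAgg q S w (fun t => c * G t) = c * intAgg q S w G := by
  unfold intAgg
  split_ifs with hq'
  · simp_rw [ENNReal.mul_iSup]
  · have hqr : 0 < q.toReal := ENNReal.toReal_pos hq.ne' hq'
    simp_rw [ENNReal.mul_rpow_of_nonneg _ _ hqr.le, mul_assoc]
    rw [lintegral_const_mul' _ _ (ENNReal.rpow_ne_top_of_nonneg hqr.le hc),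
      ENNReal.mul_rpow_of_nonneg _ _ (by positivity), ← ENNReal.rpow_mul,
      mul_one_div_cancel hqr.ne', ENNReal.rpow_one]

lemma intAgg_comp_mul {q : ℝ≥0∞} (hq : 0 < q) (D : ℝ) {ρ : ℝ} (hρ : 0 < ρ)
    (G : ℝ → ℝ≥0∞) :
    intAgg q (Ioi 0) (fun t => t ^ (-D - 1)) (fun t => G (ρ * t)) =
      ENNReal.ofReal (ρ ^ (D * invE q)) * intAgg q (Ioi 0) (fun t => t ^ (-D - 1)) G := by
  unfold intAgg invE
  split_ifs with hq'
  · have hsup : ⨆ t ∈ Ioi (0 : ℝ), G (ρ * t) = ⨆ t ∈ Ioi (0 : ℝ), G t := by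
      refine le_antisymm (iSup₂_le fun t ht => le_iSup₂_of_le (ρ * t) (mul_pos hρ ht) le_rfl)
        (iSup₂_le fun t ht => le_iSup₂_of_le (ρ⁻¹ * t) (mul_pos (inv_pos.2 hρ) ht) ?_)
      rw [mul_inv_cancel_left₀ hρ.ne']
    rw [hsup, mul_zero, rpow_zero, ENNReal.ofReal_one, one_mul]
  · have hqr : 0 < q.toReal := ENNReal.toReal_pos hq.ne' hq'
    rw [lintegral_Ioi_comp_mul_mul_rpow D hρ (fun u => G u ^ q.toReal),
      ENNReal.mul_rpow_of_nonneg _ _ (by positivity),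
      ENNReal.ofReal_rpow_of_pos (rpow_pos_of_pos hρ _), ← rpow_mul hρ.le]

lemma intAgg_rpow_mul_comp_mul {q : ℝ≥0∞} (hq : 0 < q) (s D : ℝ) {ρ : ℝ} (hρ : 0 < ρ)
    (P : ℝ → ℝ≥0∞) :
    intAgg q (Ioi 0) (fun t => t ^ (-D - 1)) (fun t => ENNReal.ofReal (t ^ (-s)) * P (ρ * t)) =
      ENNReal.ofReal (ρ ^ (s + D * invE q)) *
        intAgg q (Ioi 0) (fun t => t ^ (-D - 1)) (fun t => ENNReal.ofReal (t ^ (-s)) * P t) := by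
  have hpt : ∀ t ∈ Ioi (0 : ℝ), ENNReal.ofReal (t ^ (-s)) * P (ρ * t) =
      ENNReal.ofReal (ρ ^ s) * (ENNReal.ofReal ((ρ * t) ^ (-s)) * P (ρ * t)) := by
    intro t ht
    rw [← mul_assoc, ← ENNReal.ofReal_mul (by positivity), mul_rpow hρ.le (le_of_lt ht),
      ← mul_assoc, ← rpow_add hρ, add_neg_cancel, rpow_zero, one_mul]
  rw [intAgg_congr q measurableSet_Ioi _ hpt, intAgg_const_mul hq _ _ ENNReal.ofReal_ne_top,
    intAgg_comp_mul hq D hρ (fun u => ENNReal.ofReal (u ^ (-s)) * P u), ← mul_assoc,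
    ← ENNReal.ofReal_mul (by positivity), ← rpow_add hρ]

lemma lpE_mono (p : ℝ≥0∞) {J K : Ed d → ℝ≥0∞} (h : ∀ x, J x ≤ K x) :
    lpE p J ≤ lpE p K := by
  unfold lpE
  split
  · exact essSup_mono_ae (Filter.Eventually.of_forall h)
  · exact ENNReal.rpow_le_rpow (lintegral_mono fun x => by gcongr; exact h x) (by positivity)

lemma lpE_const_mul {p : ℝ≥0∞} (hp : 0 < p) {c : ℝ≥0∞} (hc : c ≠ ∞) (J : Ed d → ℝ≥0∞) :
    lpE p (fun x => c * J x) = c * lpE p J := by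
  unfold lpE
  split_ifs with hp'
  · exact ENNReal.essSup_const_mul
  · have hpr : 0 < p.toReal := ENNReal.toReal_pos hp.ne' hp'
    simp_rw [ENNReal.mul_rpow_of_nonneg _ _ hpr.le]
    rw [lintegral_const_mul' _ _ (ENNReal.rpow_ne_top_of_nonneg hpr.le hc),
      ENNReal.mul_rpow_of_nonneg _ _ (by positivity), ← ENNReal.rpow_mul,
      mul_one_div_cancel hpr.ne', ENNReal.rpow_one]

lemma lpE_comp_smul_add (p : ℝ≥0∞) {ρ : ℝ} (hρ : 0 < ρ) (z : Ed d) (J : Ed d → ℝ≥0∞) :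
    lpE p (fun x => J (ρ • x + z)) = ENNReal.ofReal (ρ ^ (-(d : ℝ) * invE p)) * lpE p J := by
  unfold lpE invE
  split_ifs with hp'
  · simp [essSup_comp_smul_add volume hρ.ne' z J]
  · have hjac : |(ρ ^ Module.finrank ℝ (Ed d))⁻¹| = ρ ^ (-(d : ℝ)) := by
      rw [finrank_euclideanSpace_fin, abs_of_pos (by positivity), rpow_neg hρ.le, rpow_natCast]
    rw [lintegral_comp_smul_add volume hρ.ne' z (fun x => J x ^ p.toReal), hjac,
      ENNReal.mul_rpow_of_nonneg _ _ (by positivity),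
      ENNReal.ofReal_rpow_of_pos (rpow_pos_of_pos hρ _), ← rpow_mul hρ.le]

section PeetreWeight

variable {E : Type*} [NormedAddCommGroup E] [NormedSpace ℝ E]

lemma one_add_norm_add_smul_div_le {r t : ℝ} (hr : 0 < r) (ht : 0 < t) (y z : E) :
    1 + ‖y + t • z‖ / (r * t) ≤ max 1 r⁻¹ * (1 + ‖z‖) * (1 + ‖y‖ / t) := by
  set M := max 1 r⁻¹
  have hM1 : 1 ≤ M := le_max_left _ _
  have hu : 0 ≤ ‖y‖ / t := by positivity
  have hshift : ‖y + t • z‖ / (r * t) ≤ M * (‖y‖ / t + ‖z‖) := by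
    calc ‖y + t • z‖ / (r * t) ≤ (‖y‖ + t * ‖z‖) / (r * t) := by
          gcongr
          exact (norm_add_le _ _).trans_eq (by rw [norm_smul, norm_of_nonneg ht.le])
      _ = r⁻¹ * (‖y‖ / t + ‖z‖) := by field_simp
      _ ≤ M * (‖y‖ / t + ‖z‖) := by gcongr; exact le_max_right _ _
  nlinarith [mul_nonneg (mul_nonneg (zero_le_one.trans hM1) (norm_nonneg z)) hu]

lemma max_one_inv_rpow {r : ℝ} (hr : 0 < r) {a : ℝ} (ha : 0 ≤ a) :
    max 1 r⁻¹ ^ a = max 1 (r ^ (-a)) := by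
  rw [(monotoneOn_rpow_Ici_of_exponent_nonneg ha).map_max (mem_Ici.2 zero_le_one)
    (mem_Ici.2 (inv_pos.2 hr).le), one_rpow, inv_rpow hr.le, rpow_neg hr.le]

lemma one_add_norm_add_smul_div_rpow_le {r t : ℝ} (hr : 0 < r) (ht : 0 < t) {a : ℝ}
    (ha : 0 ≤ a) (y z : E) :
    (1 + ‖y + t • z‖ / (r * t)) ^ a ≤ max 1 (r ^ (-a)) * (1 + ‖z‖) ^ a * (1 + ‖y‖ / t) ^ a := by
  rw [← max_one_inv_rpow hr ha, ← mul_rpow (by positivity) (by positivity),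
    ← mul_rpow (by positivity) (by positivity)]
  exact rpow_le_rpow (by positivity) (one_add_norm_add_smul_div_le hr ht y z) ha

end PeetreWeight

lemma peetreSupE_leftTr (F : Ed d × ℝ → ℂ) (z : Ed d) {r : ℝ} (hr : 0 < r) (a : ℝ)
    (x : Ed d) (t : ℝ) :
    peetreSupE a (fun w => enn (leftTr z r F w)) x t =
      peetreSupE a (fun w => enn (F w)) (r⁻¹ • (x - z)) (r⁻¹ * t) := by
  unfold peetreSupE leftTr
  rw [← (Homeomorph.smulOfNeZero r hr.ne').surjective.iSup_comp]
  refine iSup_congr fun y => ?_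
  have hpoint : r⁻¹ • (x + r • y - z) = r⁻¹ • (x - z) + y := by
    rw [add_sub_right_comm, smul_add, inv_smul_smul₀ hr.ne']
  have hweight : ‖r • y‖ / t = ‖y‖ / (r⁻¹ * t) := by
    rw [norm_smul, norm_of_nonneg hr.le, inv_mul_eq_div, div_div_eq_mul_div, mul_comm]
  simp only [Homeomorph.smulOfNeZero_apply]
  rw [hpoint, hweight, div_eq_inv_mul t r]

lemma peetreSupE_rightTr_le (F : Ed d × ℝ → ℂ) (z : Ed d) {r : ℝ} (hr : 0 < r) {a : ℝ}
    (ha : 0 ≤ a) (x : Ed d) {t : ℝ} (ht : 0 < t) :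
    peetreSupE a (fun w => enn (rightTr z r F w)) x t ≤
      ENNReal.ofReal (max 1 (r ^ (-a)) * (1 + ‖z‖) ^ a) *
        peetreSupE a (fun w => enn (F w)) x (r * t) := by
  refine iSup_le fun y => ?_
  set K := max 1 (r ^ (-a)) * (1 + ‖z‖) ^ a
  have hinv : ((1 + ‖y‖ / t) ^ a)⁻¹ ≤ K * ((1 + ‖y + t • z‖ / (r * t)) ^ a)⁻¹ := by
    rw [← div_eq_mul_inv, le_div_iff₀ (by positivity), inv_mul_le_iff₀ (by positivity)]
    exact (one_add_norm_add_smul_div_rpow_le hr ht ha y z).trans_eq (mul_comm _ _)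
  calc enn (rightTr z r F (x + y, t)) / ENNReal.ofReal ((1 + ‖y‖ / t) ^ a)
      = enn (F (x + (y + t • z), r * t)) * ENNReal.ofReal ((1 + ‖y‖ / t) ^ a)⁻¹ := by
        rw [div_eq_mul_inv, ENNReal.ofReal_inv_of_pos (by positivity), rightTr, add_assoc]
    _ ≤ enn (F (x + (y + t • z), r * t)) *
          ENNReal.ofReal (K * ((1 + ‖y + t • z‖ / (r * t)) ^ a)⁻¹) := by gcongr
    _ = ENNReal.ofReal K * (enn (F (x + (y + t • z), r * t)) /
          ENNReal.ofReal ((1 + ‖y + t • z‖ / (r * t)) ^ a)) := by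
        rw [ENNReal.ofReal_mul (by positivity), ENNReal.ofReal_inv_of_pos (by positivity),
          mul_left_comm, ← div_eq_mul_inv]
    _ ≤ ENNReal.ofReal K * peetreSupE a (fun w => enn (F w)) x (r * t) := by
        gcongr
        exact le_iSup (fun y' => enn (F (x + y', r * t)) /
          ENNReal.ofReal ((1 + ‖y'‖ / (r * t)) ^ a)) (y + t • z)

lemma PGnorm_leftTr {s a : ℝ} {p q : ℝ≥0∞} (hp : 0 < p) (hq : 0 < q) (F : Ed d × ℝ → ℂ)
    (z : Ed d) {r : ℝ} (hr : 0 < r) :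
    PGnorm s a p q (leftTr z r F) =
      ENNReal.ofReal (r ^ ((d : ℝ) * (invE p - invE q) - s)) * PGnorm s a p q F := by
  unfold PGnorm PGnormE
  set I := fun x => intAgg q (Ioi 0) (fun t => t ^ (-(d : ℝ) - 1))
    (fun t => ENNReal.ofReal (t ^ (-s)) * peetreSupE a (fun w => enn (F w)) x t)
  have hinner : ∀ x, intAgg q (Ioi 0) (fun t => t ^ (-(d : ℝ) - 1))
      (fun t => ENNReal.ofReal (t ^ (-s)) * peetreSupE a (fun w => enn (leftTr z r F w)) x t) =
        ENNReal.ofReal (r⁻¹ ^ (s + d * invE q)) * I (r⁻¹ • x + -(r⁻¹ • z)) := by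
    intro x
    simp_rw [peetreSupE_leftTr F z hr]
    rw [intAgg_rpow_mul_comp_mul hq s d (inv_pos.2 hr), smul_sub, sub_eq_add_neg (r⁻¹ • x)]
  rw [funext hinner, lpE_const_mul hp ENNReal.ofReal_ne_top, lpE_comp_smul_add p (inv_pos.2 hr),
    ← mul_assoc, ← ENNReal.ofReal_mul (by positivity), ← rpow_add (inv_pos.2 hr),
    inv_rpow hr.le, ← rpow_neg hr.le]
  ring_nf

lemma PGnorm_rightTr_le {s a : ℝ} {p q : ℝ≥0∞} (hp : 0 < p) (hq : 0 < q) (ha : 0 ≤ a)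
    (F : Ed d × ℝ → ℂ) (z : Ed d) {r : ℝ} (hr : 0 < r) :
    PGnorm s a p q (rightTr z r F) ≤
      ENNReal.ofReal (r ^ (s + (d : ℝ) * invE q) * max 1 (r ^ (-a)) * (1 + ‖z‖) ^ a) *
        PGnorm s a p q F := by
  unfold PGnorm PGnormE
  set I := fun x => intAgg q (Ioi 0) (fun t => t ^ (-(d : ℝ) - 1))
    (fun t => ENNReal.ofReal (t ^ (-s)) * peetreSupE a (fun w => enn (F w)) x t)
  set C := ENNReal.ofReal (max 1 (r ^ (-a)) * (1 + ‖z‖) ^ a)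
  have hinner : ∀ x, intAgg q (Ioi 0) (fun t => t ^ (-(d : ℝ) - 1))
      (fun t => ENNReal.ofReal (t ^ (-s)) * peetreSupE a (fun w => enn (rightTr z r F w)) x t) ≤
        ENNReal.ofReal (r ^ (s + d * invE q)) * C * I x := by
    intro x
    calc _ ≤ intAgg q (Ioi 0) (fun t => t ^ (-(d : ℝ) - 1)) (fun t =>
          C * (ENNReal.ofReal (t ^ (-s)) * peetreSupE a (fun w => enn (F w)) x (r * t))) := by
          refine intAgg_mono q measurableSet_Ioi _ fun t ht => ?_
          rw [mul_left_comm]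
          gcongr
          exact peetreSupE_rightTr_le F z hr ha x ht
      _ = _ := by
          rw [intAgg_const_mul hq _ _ ENNReal.ofReal_ne_top, intAgg_rpow_mul_comp_mul hq s d hr,
            mul_left_comm, mul_assoc]
  refine (lpE_mono p hinner).trans_eq ?_
  rw [lpE_const_mul hp (by finiteness), ← ENNReal.ofReal_mul (by positivity), mul_assoc]

end TranslationInvariance

theorem statement9_general (d : ℕ) (s : ℝ) (p q : ℝ≥0∞)
    (hp : 0 < p) (hq : 0 < q) (a : ℝ) (ha : 0 < a)
    (z : Ed d) (r : ℝ) (hr : 0 < r) :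
    (∀ F : Ed d × ℝ → ℂ, Measurable F →
        PGnorm s a p q (leftTr z r F) =
          ENNReal.ofReal (r ^ ((d : ℝ) * (invE p - invE q) - s)) * PGnorm s a p q F) ∧
    (∀ F : Ed d × ℝ → ℂ, Measurable F →
        PGnorm s a p q (rightTr z r F) ≤
          ENNReal.ofReal (r ^ (s + (d : ℝ) * invE q) * max 1 (r ^ (-a)) * (1 + ‖z‖) ^ a) *
            PGnorm s a p q F) :=
  ⟨fun F _ => PGnorm_leftTr hp hq F z hr, fun F _ => PGnorm_rightTr_le hp hq ha.le F z hr⟩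

/-- Translation invariance of the Peetre-type spaces `Ṗ^{s,a}_{p,q}(G)` on the
`ax+b`-group (Proposition 4.2): the left translation acts with operator norm
exactly `r^{d(1/p-1/q)-s}` and the right translation is bounded by
`r^{s+d/q} max{1, r^{-a}} (1+|z|)^a`. -/
theorem statement9 (d : ℕ) (hd : 1 ≤ d) (s : ℝ) (p q : ℝ≥0∞)
    (hp : 0 < p) (hq : 0 < q) (a : ℝ) (ha : 0 < a)
    (z : Ed d) (r : ℝ) (hr : 0 < r) :
    (∀ F : Ed d × ℝ → ℂ, Measurable F →
        PGnorm s a p q (leftTr z r F) =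
          ENNReal.ofReal (r ^ ((d : ℝ) * (invE p - invE q) - s)) * PGnorm s a p q F) ∧
    (∀ F : Ed d × ℝ → ℂ, Measurable F →
        PGnorm s a p q (rightTr z r F) ≤
          ENNReal.ofReal (r ^ (s + (d : ℝ) * invE q) * max 1 (r ^ (-a)) * (1 + ‖z‖) ^ a) *
            PGnorm s a p q F) :=
  statement9_general d s p q hp hq a ha z r hr
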